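/- arXiv:2009.03054 — 5 statements merged into one kernel-verified Lean document; each statement's English description precedes it below -/
import Mathlib

section
/- Let H be Hermitian with simple eigenvalues e_j and distinct Bohr frequencies e_j − e_k (j ≠ k), Γ > 0, T a density matrix. Then the superoperator A(ρ) = i[H,ρ] + Γρ on B(H) is invertible, and the element ρ_SS = Γ·A^{-1}(T) satisfies L(ρ_SS) = 0 and tr(ρ_SS) = 1, where L(ρ) = −i[H,ρ] + Γ(T tr(ρ) − ρ). -/
open Matrix
open scoped ComplexOrder

/-- The superoperator `A(ρ) = i[H,ρ] + Γρ` is invertible, and `ρ_SS = Γ A⁻¹(T)`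
(i.e. the solution of `A(ρ_SS) = Γ T`) is a trace-one element of the kernel of
the reset Lindbladian `L(ρ) = −i[H,ρ] + Γ(T tr(ρ) − ρ)`. -/
theorem stmt6 {N : ℕ} (H T : Matrix (Fin N) (Fin N) ℂ) (hH : H.IsHermitian)
    (e : Fin N → ℝ) (he : Function.Injective e)
    (φ : Fin N → Fin N → ℂ)
    (hortho : ∀ j k, (∑ i, star (φ j i) * φ k i) = if j = k then 1 else 0)
    (heig : ∀ j, H.mulVec (φ j) = (e j : ℂ) • φ j)
    (hBohr : ∀ j k j' k', j ≠ k → j' ≠ k' → e j - e k = e j' - e k' → j = j' ∧ k = k')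
    (Γ : ℝ) (hΓ : 0 < Γ) (hT : T.PosSemidef) (hTtr : T.trace = 1)
    (𝒜 : Matrix (Fin N) (Fin N) ℂ → Matrix (Fin N) (Fin N) ℂ)
    (h𝒜 : ∀ ρ, 𝒜 ρ = Complex.I • (H * ρ - ρ * H) + (Γ : ℂ) • ρ) :
    Function.Bijective 𝒜 ∧
    ∀ ρSS, 𝒜 ρSS = (Γ : ℂ) • T →
      (-Complex.I • (H * ρSS - ρSS * H) + (Γ : ℂ) • (ρSS.trace • T - ρSS) = 0
        ∧ ρSS.trace = 1) := by
  classical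
  have hΓ0 : (Γ : ℂ) ≠ 0 := Complex.ofReal_ne_zero.mpr (ne_of_gt hΓ)
  -- the linear map version of 𝒜
  set L : Matrix (Fin N) (Fin N) ℂ →ₗ[ℂ] Matrix (Fin N) (Fin N) ℂ :=
    { toFun := fun ρ => Complex.I • (H * ρ - ρ * H) + (Γ : ℂ) • ρ
      map_add' := by
        intro x y
        simp only [mul_add, add_mul, smul_add]
        module
      map_smul' := by
        intro c x
        simp [mul_smul_comm, smul_mul_assoc, ← smul_sub, smul_comm c]
    } with hL
  have h𝒜L : 𝒜 = ⇑L := by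
    funext ρ; rw [h𝒜]; rfl
  -- injectivity
  have hinj : Function.Injective L := by
    rw [← LinearMap.ker_eq_bot, LinearMap.ker_eq_bot']
    intro ρ hρ
    simp only [hL, LinearMap.coe_mk, AddHom.coe_mk] at hρ
    set C : Matrix (Fin N) (Fin N) ℂ := H * ρ - ρ * H with hC
    set c : ℂ := (ρᴴ * C).trace with hc
    set t : ℂ := (ρᴴ * ρ).trace with ht
    have key : Complex.I * c + (Γ : ℂ) * t = 0 := by
      have := congrArg (fun M => (ρᴴ * M).trace) hρ
      simpa [mul_add, Matrix.mul_smul, Matrix.trace_add, Matrix.trace_smul,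
        smul_eq_mul, hc, ht] using this
    have hcre : (starRingEnd ℂ) c = c := by
      have h1 : (starRingEnd ℂ) c = ((ρᴴ * C)ᴴ).trace := by
        rw [Matrix.trace_conjTranspose]; rfl
      rw [h1, Matrix.conjTranspose_mul, Matrix.conjTranspose_conjTranspose, hC,
        Matrix.conjTranspose_sub, Matrix.conjTranspose_mul, Matrix.conjTranspose_mul, hH.eq]
      rw [hc, hC, Matrix.sub_mul, Matrix.mul_sub, Matrix.trace_sub, Matrix.trace_sub]
      rw [Matrix.mul_assoc, Matrix.mul_assoc, Matrix.trace_mul_comm H (ρᴴ * ρ),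
        Matrix.mul_assoc]
    have hcim : c.im = 0 := by
      have := Complex.conj_eq_iff_im.mp hcre; exact this
    -- t is a nonneg real: t.re = ∑ normSq
    have htre : t.re = ∑ j, ∑ i, Complex.normSq (ρ i j) := by
      have : t = ∑ j, ∑ i, ((Complex.normSq (ρ i j) : ℂ)) := by
        rw [ht, Matrix.trace]
        congr 1; funext j
        simp only [Matrix.diag_apply, Matrix.mul_apply, Matrix.conjTranspose_apply]
        congr 1; funext i
        rw [Complex.star_def, ← Complex.normSq_eq_conj_mul_self]
      rw [this]
      push_cast
      simp
    have htre0 : t.re = 0 := by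
      have := congrArg Complex.re key
      simp [Complex.add_re, Complex.mul_re, hcim, Complex.ofReal_re, Complex.ofReal_im] at this
      rcases this with h | h
      · exact absurd h (ne_of_gt hΓ)
      · exact h
    have hsum : ∑ j, ∑ i, Complex.normSq (ρ i j) = 0 := by rw [← htre, htre0]
    ext i j
    have h1 : ∀ j ∈ Finset.univ, (0:ℝ) ≤ ∑ i, Complex.normSq (ρ i j) := by
      intro j _; exact Finset.sum_nonneg fun i _ => Complex.normSq_nonneg _
    have h2 := (Finset.sum_eq_zero_iff_of_nonneg h1).mp hsum j (Finset.mem_univ j)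
    have h3 : ∀ i ∈ Finset.univ, (0:ℝ) ≤ Complex.normSq (ρ i j) := by
      intro i _; exact Complex.normSq_nonneg _
    have h4 := (Finset.sum_eq_zero_iff_of_nonneg h3).mp h2 i (Finset.mem_univ i)
    simpa using Complex.normSq_eq_zero.mp h4
  have hbij : Function.Bijective 𝒜 := by
    rw [h𝒜L]
    exact ⟨hinj, LinearMap.injective_iff_surjective.mp hinj⟩
  refine ⟨hbij, ?_⟩
  intro ρSS hρSS
  rw [h𝒜 ρSS] at hρSS
  have htr : ρSS.trace = 1 := by
    have := congrArg Matrix.trace hρSS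
    simp only [Matrix.trace_add, Matrix.trace_smul, Matrix.trace_sub,
      Matrix.trace_mul_comm H ρSS, sub_self, smul_zero, zero_add, hTtr,
      smul_eq_mul, mul_one, mul_zero, zero_add] at this
    exact mul_left_cancel₀ hΓ0 (this.trans (mul_one _).symm)
  refine ⟨?_, htr⟩
  rw [htr, one_smul, smul_sub (Γ:ℂ) T ρSS, ← hρSS]
  module
end

section
/- With D(ρ) = γ_A(τ_A ⊗ tr_A(ρ) − ρ) + γ_B(tr_B(ρ) ⊗ τ_B − ρ) for γ_A, γ_B > 0, the spectrum of the linear map D on B(H_A⊗H_C⊗H_B) is contained in {0, −γ_A, −γ_B, −(γ_A+γ_B)}, and D is diagonalizable. -/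
/-!
`P = τ_A ⊗ tr_A(·)` and `Q = tr_B(·) ⊗ τ_B` are commuting idempotents (idempotent because the
`τ`'s have unit trace; commuting because they act on different tensor factors), and
`D = γ_A (P - 1) + γ_B (Q - 1)`. The four products `PQ`, `(1 - P)Q`, `P(1 - Q)`, `(1 - P)(1 - Q)`
sum to the identity, commute with `D`, and `D` acts on their ranges as `0`, `-γ_A`, `-γ_B`,
`-(γ_A + γ_B)`; this resolution of the identity gives both the spectral bound and the
eigenspace decomposition.
-/

open Matrix
open scoped ComplexOrder

/-- `P(ρ) = τ_A ⊗ tr_A(ρ)` on `B(H_A ⊗ H_C ⊗ H_B)`. -/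
noncomputable def resetA {A C B : Type*} [Fintype A]
    (τA : Matrix A A ℂ) (ρ : Matrix (A × C × B) (A × C × B) ℂ) :
    Matrix (A × C × B) (A × C × B) ℂ :=
  Matrix.of fun p q => τA p.1 q.1 * ∑ x, ρ (x, p.2) (x, q.2)

/-- `Q(ρ) = tr_B(ρ) ⊗ τ_B` on `B(H_A ⊗ H_C ⊗ H_B)`. -/
noncomputable def resetB {A C B : Type*} [Fintype B]
    (τB : Matrix B B ℂ) (ρ : Matrix (A × C × B) (A × C × B) ℂ) :
    Matrix (A × C × B) (A × C × B) ℂ :=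
  Matrix.of fun p q => (∑ y, ρ (p.1, p.2.1, y) (q.1, q.2.1, y)) * τB p.2.2 q.2.2

section CommutingIdempotents

variable {S R : Type*} [CommRing S] [Ring R] [Algebra S R] {P Q : R}

def cornerProjections (P Q : R) : Fin 4 → R :=
  ![P * Q, (1 - P) * Q, P * (1 - Q), (1 - P) * (1 - Q)]

theorem sum_cornerProjections (P Q : R) : ∑ i, cornerProjections P Q i = 1 := by
  simp only [cornerProjections, Fin.sum_univ_four, Matrix.cons_val]
  noncomm_ring

theorem commute_cornerProjections {D : R} (hDP : Commute D P) (hDQ : Commute D Q) (i : Fin 4) :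
    Commute D (cornerProjections P Q i) := by
  have hDP' := (Commute.one_right D).sub_right hDP
  have hDQ' := (Commute.one_right D).sub_right hDQ
  fin_cases i
  exacts [hDP.mul_right hDQ, hDP'.mul_right hDQ, hDP.mul_right hDQ', hDP'.mul_right hDQ']

theorem mul_cornerProjections (hP : IsIdempotentElem P) (hQ : IsIdempotentElem Q)
    (hPQ : Commute P Q) (a b : S) (i : Fin 4) :
    (a • (P - 1) + b • (Q - 1)) * cornerProjections P Q i =
      ![0, -a, -b, -(a + b)] i • cornerProjections P Q i := by
  have hPP (x : R) : x * P * P = x * P := by rw [mul_assoc, hP.eq]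
  fin_cases i <;>
    simp only [cornerProjections, Fin.reduceFinMk, Fin.zero_eta, Fin.mk_one, Fin.isValue,
      cons_val_zero, cons_val_one, cons_val, add_mul, sub_mul, mul_sub, one_mul, mul_one,
      smul_mul_assoc, ← mul_assoc, hP.eq, hQ.eq, hPQ.eq, hPP, sub_self, sub_zero, smul_zero,
      add_zero, zero_add] <;>
    module

end CommutingIdempotents

namespace Module.End

variable {K V ι : Type*} [Fintype ι]

theorem iSup_eigenspace_eq_top_of_sum_eq_one [CommRing K] [AddCommGroup V] [Module K V]
    {f : End K V} {E : ι → End K V} {c : ι → K} (hsum : ∑ i, E i = 1)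
    (hE : ∀ i, f * E i = c i • E i) :
    ⨆ μ, f.eigenspace μ = ⊤ := by
  refine eq_top_iff.mpr fun v _ => ?_
  have hv : ∑ i, E i v = v := by simpa using congr($hsum v)
  rw [← hv]
  exact Submodule.sum_mem _ fun i _ =>
    Submodule.mem_iSup_of_mem (c i) (mem_eigenspace_iff.mpr congr($(hE i) v))

theorem spectrum_subset_range_of_sum_eq_one [Field K] [AddCommGroup V] [Module K V]
    [FiniteDimensional K V] {f : End K V} {E : ι → End K V} {c : ι → K}
    (hsum : ∑ i, E i = 1) (hE : ∀ i, f * E i = c i • E i) (hcomm : ∀ i, Commute f (E i)) :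
    spectrum K f ⊆ Set.range c := by
  intro μ hμ
  obtain ⟨v, hv⟩ := (hasEigenvalue_iff_mem_spectrum.mpr hμ).exists_hasEigenvector
  obtain ⟨i, hi⟩ : ∃ i, E i v ≠ 0 := by
    by_contra! h
    exact hv.2 (by simpa [h] using congr($hsum v).symm)
  refine ⟨i, smul_left_injective K hi ?_⟩
  calc c i • E i v = f (E i v) := congr($(hE i) v).symm
    _ = E i (f v) := congr($(hcomm i) v)
    _ = μ • E i v := by rw [hv.apply_eq_smul, map_smul]

theorem spectrum_subset_and_iSup_eigenspace_eq_top_of_commute_idempotent [Field K] [AddCommGroup V] [Module K V] [FiniteDimensional K V]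
    {P Q : End K V} (hP : IsIdempotentElem P) (hQ : IsIdempotentElem Q) (hPQ : Commute P Q)
    (a b : K) :
    spectrum K (a • (P - 1) + b • (Q - 1)) ⊆ {0, -a, -b, -(a + b)} ∧
      ⨆ μ, (a • (P - 1) + b • (Q - 1)).eigenspace μ = ⊤ := by
  have hDP : Commute (a • (P - 1) + b • (Q - 1)) P :=
    (((Commute.refl P).sub_left (Commute.one_left P)).smul_left a).add_left
      ((hPQ.symm.sub_left (Commute.one_left P)).smul_left b)
  have hDQ : Commute (a • (P - 1) + b • (Q - 1)) Q :=
    ((hPQ.sub_left (Commute.one_left Q)).smul_left a).add_left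
      (((Commute.refl Q).sub_left (Commute.one_left Q)).smul_left b)
  have hsum := sum_cornerProjections P Q
  have hE := mul_cornerProjections hP hQ hPQ a b
  refine ⟨(spectrum_subset_range_of_sum_eq_one hsum hE
    (commute_cornerProjections hDP hDQ)).trans ?_, iSup_eigenspace_eq_top_of_sum_eq_one hsum hE⟩
  rintro _ ⟨i, rfl⟩
  fin_cases i <;> simp

end Module.End

section Reset

variable {A C B : Type*}

theorem resetA_resetA [Fintype A] {τA : Matrix A A ℂ} (h : τA.trace = 1)
    (ρ : Matrix (A × C × B) (A × C × B) ℂ) :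
    resetA τA (resetA τA ρ) = resetA τA ρ := by
  ext p q
  simp only [resetA, Matrix.of_apply, ← Finset.sum_mul]
  rw [show ∑ x, τA x x = 1 from h, one_mul]

theorem resetB_resetB [Fintype B] {τB : Matrix B B ℂ} (h : τB.trace = 1)
    (ρ : Matrix (A × C × B) (A × C × B) ℂ) :
    resetB τB (resetB τB ρ) = resetB τB ρ := by
  ext p q
  simp only [resetB, Matrix.of_apply, ← Finset.mul_sum]
  rw [show ∑ y, τB y y = 1 from h, mul_one]

theorem resetA_resetB [Fintype A] [Fintype B] (τA : Matrix A A ℂ) (τB : Matrix B B ℂ)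
    (ρ : Matrix (A × C × B) (A × C × B) ℂ) :
    resetA τA (resetB τB ρ) = resetB τB (resetA τA ρ) := by
  ext p q
  simp only [resetA, resetB, Matrix.of_apply, Finset.mul_sum, Finset.sum_mul]
  rw [Finset.sum_comm]
  exact Finset.sum_congr rfl fun _ _ => Finset.sum_congr rfl fun _ _ => by ring

variable (C B) in
noncomputable def resetALinearMap [Fintype A] (τA : Matrix A A ℂ) :
    Module.End ℂ (Matrix (A × C × B) (A × C × B) ℂ) where
  toFun := resetA τA
  map_add' ρ σ := by
    ext p q
    simp [resetA, Finset.sum_add_distrib, mul_add]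
  map_smul' c ρ := by
    ext p q
    simp [resetA, Finset.mul_sum, mul_left_comm]

variable (A C) in
noncomputable def resetBLinearMap [Fintype B] (τB : Matrix B B ℂ) :
    Module.End ℂ (Matrix (A × C × B) (A × C × B) ℂ) where
  toFun := resetB τB
  map_add' ρ σ := by
    ext p q
    simp [resetB, Finset.sum_add_distrib, add_mul]
  map_smul' c ρ := by
    ext p q
    simp [resetB, ← Finset.mul_sum, mul_assoc]

end Reset

theorem stmt8_general {A C B : Type*} [Fintype A] [Fintype B] [Fintype C]
    (τA : Matrix A A ℂ) (hτAtr : τA.trace = 1)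
    (τB : Matrix B B ℂ) (hτBtr : τB.trace = 1)
    (γA γB : ℝ)
    (D : Module.End ℂ (Matrix (A × C × B) (A × C × B) ℂ))
    (hD : ∀ ρ, D ρ = γA • (resetA τA ρ - ρ) + γB • (resetB τB ρ - ρ)) :
    spectrum ℂ D ⊆ {0, -(γA : ℂ), -(γB : ℂ), -((γA : ℂ) + (γB : ℂ))} ∧
    (⨆ μ : ℂ, Module.End.eigenspace D μ) = ⊤ := by
  set P := resetALinearMap C B τA
  set Q := resetBLinearMap A C τB
  have hD' : D = (γA : ℂ) • (P - 1) + (γB : ℂ) • (Q - 1) := by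
    ext1 ρ
    simp [hD, P, Q, resetALinearMap, resetBLinearMap, Complex.coe_smul]
  have hP : IsIdempotentElem P := LinearMap.ext (resetA_resetA hτAtr)
  have hQ : IsIdempotentElem Q := LinearMap.ext (resetB_resetB hτBtr)
  have hPQ : Commute P Q := LinearMap.ext (resetA_resetB τA τB)
  rw [hD']
  exact Module.End.spectrum_subset_and_iSup_eigenspace_eq_top_of_commute_idempotent hP hQ hPQ _ _

/-- The reset dissipator `D(ρ) = γ_A(τ_A ⊗ tr_A(ρ) − ρ) + γ_B(tr_B(ρ) ⊗ τ_B − ρ)` has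
spectrum contained in `{0, −γ_A, −γ_B, −(γ_A+γ_B)}` and is diagonalizable. -/
theorem stmt8 {A C B : Type*} [Fintype A] [Fintype B] [Fintype C]
    (τA : Matrix A A ℂ) (hτA : τA.PosSemidef) (hτAtr : τA.trace = 1)
    (τB : Matrix B B ℂ) (hτB : τB.PosSemidef) (hτBtr : τB.trace = 1)
    (γA γB : ℝ) (hγA : 0 < γA) (hγB : 0 < γB)
    (D : Module.End ℂ (Matrix (A × C × B) (A × C × B) ℂ))
    (hD : ∀ ρ, D ρ = γA • (resetA τA ρ - ρ) + γB • (resetB τB ρ - ρ)) :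
    spectrum ℂ D ⊆ {0, -(γA : ℂ), -(γB : ℂ), -((γA : ℂ) + (γB : ℂ))} ∧
    (⨆ μ : ℂ, Module.End.eigenspace D μ) = ⊤ :=
  stmt8_general τA hτAtr τB hτBtr γA γB D hD
end

section
/- Let D be the reset dissipator with rates γ_A, γ_B > 0. For any ρ̃ ∈ B(H_A⊗H_C⊗H_B) with tr_{AB}(ρ̃) = 0, the element σ = −(γ_A+γ_B)^{-1}[ ρ̃ + (γ_A/γ_B) τ_A ⊗ tr_A(ρ̃) + (γ_B/γ_A) tr_B(ρ̃) ⊗ τ_B ] satisfies D(σ) = ρ̃; i.e. this formula provides an explicit inverse of D on the subspace {ρ : tr_{AB}(ρ) = 0} ∩ range(I − Q_0). -/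
open Matrix
open scoped ComplexOrder

/-- The reset dissipator. -/
noncomputable def resetD {A C B : Type*} [Fintype A] [Fintype B]
    (γA γB : ℝ) (τA : Matrix A A ℂ) (τB : Matrix B B ℂ)
    (ρ : Matrix (A × C × B) (A × C × B) ℂ) : Matrix (A × C × B) (A × C × B) ℂ :=
  γA • (resetA τA ρ - ρ) + γB • (resetB τB ρ - ρ)

lemma resetA_add {A C B : Type*} [Fintype A] (τA : Matrix A A ℂ)
    (x y : Matrix (A × C × B) (A × C × B) ℂ) :
    resetA τA (x + y) = resetA τA x + resetA τA y := by
  ext p q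
  simp [resetA, Finset.sum_add_distrib, mul_add]

lemma resetB_add {A C B : Type*} [Fintype B] (τB : Matrix B B ℂ)
    (x y : Matrix (A × C × B) (A × C × B) ℂ) :
    resetB τB (x + y) = resetB τB x + resetB τB y := by
  ext p q
  simp [resetB, Finset.sum_add_distrib, add_mul]

lemma resetA_smul {A C B : Type*} [Fintype A] (τA : Matrix A A ℂ) (r : ℝ)
    (x : Matrix (A × C × B) (A × C × B) ℂ) :
    resetA τA (r • x) = r • resetA τA x := by
  ext p q
  simp only [resetA, Matrix.of_apply, Matrix.smul_apply, Complex.real_smul, ← Finset.mul_sum]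
  ring

lemma resetB_smul {A C B : Type*} [Fintype B] (τB : Matrix B B ℂ) (r : ℝ)
    (x : Matrix (A × C × B) (A × C × B) ℂ) :
    resetB τB (r • x) = r • resetB τB x := by
  ext p q
  simp only [resetB, Matrix.of_apply, Matrix.smul_apply, Complex.real_smul, ← Finset.mul_sum]
  ring

/-- Explicit inverse of the reset dissipator on `{ρ : tr_{AB}(ρ) = 0}`:
for `ρ̃` with `tr_{AB}(ρ̃) = 0`, the element
`σ = −(γ_A+γ_B)⁻¹ [ρ̃ + (γ_A/γ_B) τ_A ⊗ tr_A(ρ̃) + (γ_B/γ_A) tr_B(ρ̃) ⊗ τ_B]`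
satisfies `D(σ) = ρ̃`. -/
theorem stmt11 {A C B : Type*} [Fintype A] [Fintype B] [Fintype C]
    (τA : Matrix A A ℂ) (hτA : τA.PosSemidef) (hτAtr : τA.trace = 1)
    (τB : Matrix B B ℂ) (hτB : τB.PosSemidef) (hτBtr : τB.trace = 1)
    (γA γB : ℝ) (hγA : 0 < γA) (hγB : 0 < γB)
    (ρ : Matrix (A × C × B) (A × C × B) ℂ)
    (htrAB : ∀ (c c' : C), (∑ x : A, ∑ y : B, ρ (x, c, y) (x, c', y)) = 0) :
    resetD γA γB τA τB
        ((-(γA + γB)⁻¹ : ℝ) •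
          (ρ + (γA / γB) • resetA τA ρ + (γB / γA) • resetB τB ρ))
      = ρ := by
  have hA1 : (∑ x, τA x x) = 1 := by simpa [Matrix.trace, Matrix.diag] using hτAtr
  have hB1 : (∑ y, τB y y) = 1 := by simpa [Matrix.trace, Matrix.diag] using hτBtr
  have hPP : resetA τA (resetA τA ρ) = resetA τA ρ := by
    ext p q
    simp only [resetA, Matrix.of_apply]
    rw [← Finset.sum_mul, hA1, one_mul]
  have hQQ : resetB τB (resetB τB ρ) = resetB τB ρ := by
    ext p q
    simp only [resetB, Matrix.of_apply]
    rw [← Finset.mul_sum, hB1, mul_one]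
  have hPQ : resetA τA (resetB τB ρ) = 0 := by
    ext p q
    simp only [resetA, resetB, Matrix.of_apply, Matrix.zero_apply]
    rw [← Finset.sum_mul, htrAB, zero_mul, mul_zero]
  have hQP : resetB τB (resetA τA ρ) = 0 := by
    ext p q
    simp only [resetA, resetB, Matrix.of_apply, Matrix.zero_apply]
    rw [← Finset.mul_sum, Finset.sum_comm, htrAB, mul_zero, zero_mul]
  set X := resetA τA ρ with hX
  set Y := resetB τB ρ with hY
  have hPσ : resetA τA ((-(γA + γB)⁻¹ : ℝ) • (ρ + (γA / γB) • X + (γB / γA) • Y))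
      = (-(γA + γB)⁻¹ : ℝ) • ((1 + γA / γB) • X) := by
    rw [resetA_smul, resetA_add, resetA_add, resetA_smul, resetA_smul, ← hX, hPP, hPQ]
    module
  have hQσ : resetB τB ((-(γA + γB)⁻¹ : ℝ) • (ρ + (γA / γB) • X + (γB / γA) • Y))
      = (-(γA + γB)⁻¹ : ℝ) • ((1 + γB / γA) • Y) := by
    rw [resetB_smul, resetB_add, resetB_add, resetB_smul, resetB_smul, ← hY, hQQ, hQP]
    module
  rw [resetD, hPσ, hQσ]
  have h1 : γA + γB ≠ 0 := by positivity
  match_scalars <;> field_simp <;> ring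
end

section
/- Let 𝔥 be as in the context, and fix j. The principal submatrix 𝔥̂_{jj} obtained by deleting row and column j has all its eigenvalues with nonnegative real part (by Gershgorin's theorem), and hence det 𝔥̂_{jj} ≥ 0; moreover det 𝔥̂_{jj} > 0 if h_j(k) > 0 for every k ≠ j. -/
open Matrix

private lemma aux_eval {m : Type*} [Fintype m] [DecidableEq m] (B : Matrix m m ℝ) (t : ℝ) :
    ((-B).charpoly).eval t = (B + t • (1 : Matrix m m ℝ)).det := by
  rw [Matrix.charpoly]
  rw [show Polynomial.eval t (charmatrix (-B)).det
      = ((charmatrix (-B)).map (Polynomial.evalRingHom t)).det from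
    RingHom.map_det (Polynomial.evalRingHom t) (charmatrix (-B))]
  congr 1
  ext i k
  by_cases hik : i = k
  · subst hik
    simp [charmatrix_apply_eq, Matrix.map_apply, Matrix.add_apply, Matrix.smul_apply,
      Matrix.one_apply_eq, add_comm]
  · simp [charmatrix_apply_ne _ _ _ hik, Matrix.map_apply, Matrix.add_apply, Matrix.smul_apply,
      Matrix.one_apply_ne hik]

private lemma det_pos_aux {m : Type*} [Fintype m] [DecidableEq m] [Nonempty m]
    (B : Matrix m m ℝ)
    (hdom : ∀ k, ∑ i ∈ Finset.univ.erase k, |B i k| ≤ B k k) :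
    0 ≤ B.det ∧ ((∀ k, ∑ i ∈ Finset.univ.erase k, |B i k| < B k k) → 0 < B.det) := by
  have hdiag : ∀ k, 0 ≤ B k k := fun k =>
    le_trans (Finset.sum_nonneg fun i _ => abs_nonneg _) (hdom k)
  set p := (-B).charpoly with hp
  have hev : ∀ t, p.eval t = (B + t • (1 : Matrix m m ℝ)).det := aux_eval B
  have hcont : Continuous fun t : ℝ => p.eval t := p.continuous
  have hmon : p.Monic := Matrix.charpoly_monic _
  have hdeg : 0 < p.degree := by
    rw [Polynomial.degree_eq_natDegree hmon.ne_zero, hp, Matrix.charpoly_natDegree_eq_dim]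
    exact_mod_cast Fintype.card_pos
  have htop : Filter.Tendsto (fun t => p.eval t) Filter.atTop Filter.atTop :=
    Polynomial.tendsto_atTop_of_leadingCoeff_nonneg p hdeg (by simp [hmon.leadingCoeff])
  have hne : ∀ t : ℝ, 0 < t → (B + t • (1 : Matrix m m ℝ)).det ≠ 0 := by
    intro t ht
    apply det_ne_zero_of_sum_col_lt_diag
    intro k
    have h1 : ∀ i ∈ Finset.univ.erase k, ‖(B + t • (1 : Matrix m m ℝ)) i k‖ = |B i k| := by
      intro i hi
      have hik : i ≠ k := Finset.ne_of_mem_erase hi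
      simp [Matrix.add_apply, Matrix.smul_apply, Matrix.one_apply_ne hik, Real.norm_eq_abs]
    rw [Finset.sum_congr rfl h1]
    have h2 : (B + t • (1 : Matrix m m ℝ)) k k = B k k + t := by
      simp [Matrix.add_apply, Matrix.smul_apply, Matrix.one_apply_eq]
    rw [h2, Real.norm_eq_abs, abs_of_nonneg (by linarith [hdiag k])]
    linarith [hdom k]
  have hpos' : ∀ t : ℝ, 0 < t → 0 < p.eval t := by
    intro t ht
    rcases lt_trichotomy (p.eval t) 0 with hlt | heq | hgt
    · exfalso
      obtain ⟨t', h1', h2'⟩ :=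
        ((htop.eventually_ge_atTop 1).and (Filter.eventually_ge_atTop t)).exists
      obtain ⟨c, hc, hc0⟩ := intermediate_value_Icc h2' hcont.continuousOn
        (Set.mem_Icc.mpr ⟨le_of_lt hlt, by linarith⟩)
      exact hne c (lt_of_lt_of_le ht hc.1) (by rw [← hev]; exact hc0)
    · exact absurd (by rw [← hev]; exact heq) (hne t ht)
    · exact hgt
  have h0 : 0 ≤ p.eval 0 := by
    have hT : Filter.Tendsto (fun t => p.eval t) (nhdsWithin 0 (Set.Ioi 0)) (nhds (p.eval 0)) :=
      (hcont.tendsto 0).mono_left nhdsWithin_le_nhds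
    exact ge_of_tendsto hT
      (Filter.eventually_of_mem self_mem_nhdsWithin fun t ht => le_of_lt (hpos' t ht))
  have hB0 : p.eval 0 = B.det := by rw [hev]; simp
  refine ⟨hB0 ▸ h0, fun hstrict => ?_⟩
  have hne0 : B.det ≠ 0 := by
    apply det_ne_zero_of_sum_col_lt_diag
    intro k
    rw [show ‖B k k‖ = B k k from abs_of_nonneg (hdiag k)]
    refine lt_of_le_of_lt (le_of_eq ?_) (hstrict k)
    exact Finset.sum_congr rfl fun i _ => rfl
  exact lt_of_le_of_ne (hB0 ▸ h0) (Ne.symm hne0)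

/-- The principal minor `𝔥̂_{jj}` of the rate matrix has all its (complex) eigenvalues with
nonnegative real part, hence nonnegative determinant; the determinant is positive when
`h_j(k) > 0` for every `k ≠ j`. -/
theorem stmt16 {n : ℕ} (hn : 2 ≤ n) (h : Fin n → Fin n → ℝ)
    (hpos : ∀ j k, j ≠ k → 0 ≤ h j k)
    (𝔥 : Matrix (Fin n) (Fin n) ℝ)
    (hdef : ∀ j k, 𝔥 j k
      = if j = k then (∑ l ∈ Finset.univ.filter (fun l => l ≠ j), h l j) else -(h j k))
    (j : Fin n) :
    (∀ μ ∈ spectrum ℂ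
        ((𝔥.submatrix (fun i : {k : Fin n // k ≠ j} => (i : Fin n))
            (fun i : {k : Fin n // k ≠ j} => (i : Fin n))).map (Complex.ofReal)),
      0 ≤ μ.re) ∧
    0 ≤ (𝔥.submatrix (fun i : {k : Fin n // k ≠ j} => (i : Fin n))
          (fun i : {k : Fin n // k ≠ j} => (i : Fin n))).det ∧
    ((∀ k, k ≠ j → 0 < h j k) →
      0 < (𝔥.submatrix (fun i : {k : Fin n // k ≠ j} => (i : Fin n))
            (fun i : {k : Fin n // k ≠ j} => (i : Fin n))).det) := by
  set B := 𝔥.submatrix (fun i : {k : Fin n // k ≠ j} => (i : Fin n))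
      (fun i : {k : Fin n // k ≠ j} => (i : Fin n)) with hB
  haveI : Nonempty {k : Fin n // k ≠ j} := by
    by_cases h0 : j = ⟨0, by omega⟩
    · exact ⟨⟨⟨1, by omega⟩, by rw [h0]; intro hc; exact absurd (congrArg Fin.val hc) (by simp)⟩⟩
    · exact ⟨⟨⟨0, by omega⟩, fun hc => h0 hc.symm⟩⟩
  -- key identity
  have hkey : ∀ k : {k : Fin n // k ≠ j},
      (∑ i ∈ Finset.univ.erase k, |B i k|) + h j ↑k = B k k := by
    intro k
    have e1 : ∀ i ∈ Finset.univ.erase k, |B i k| = h ↑i ↑k := by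
      intro i hi
      have hik : (i : Fin n) ≠ ↑k := fun hc => Finset.ne_of_mem_erase hi (Subtype.ext hc)
      rw [hB]
      show |𝔥 ↑i ↑k| = h ↑i ↑k
      rw [hdef, if_neg hik, abs_neg, abs_of_nonneg (hpos _ _ hik)]
    have e2 : B k k = ∑ l ∈ Finset.univ.filter (fun l => l ≠ (k : Fin n)), h l ↑k := by
      rw [hB]; show 𝔥 ↑k ↑k = _; rw [hdef, if_pos rfl]
    rw [Finset.sum_congr rfl e1, Finset.sum_erase_eq_sub (Finset.mem_univ k),
      ← Finset.sum_subtype (Finset.univ.filter (fun l => l ≠ j)) (by simp) (fun l => h l ↑k), e2,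
      Finset.filter_ne', Finset.filter_ne',
      Finset.sum_erase_eq_sub (Finset.mem_univ j),
      Finset.sum_erase_eq_sub (Finset.mem_univ (k : Fin n))]
    ring
  have hdom : ∀ k : {k : Fin n // k ≠ j},
      ∑ i ∈ Finset.univ.erase k, |B i k| ≤ B k k := by
    intro k
    have := hpos j ↑k (Ne.symm k.2)
    linarith [hkey k]
  obtain ⟨hd1, hd2⟩ := det_pos_aux B hdom
  refine ⟨?_, hd1, fun hst => hd2 fun k => ?_⟩
  · -- spectrum part, via Gershgorin on the transpose
    intro μ hμ
    set A := B.map (Complex.ofReal) with hA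
    have hμ' : μ ∈ spectrum ℂ Aᵀ := by
      rw [spectrum.mem_iff] at *
      intro hu
      apply hμ
      rw [show (algebraMap ℂ (Matrix _ _ ℂ) μ - Aᵀ) = (algebraMap ℂ (Matrix _ _ ℂ) μ - A)ᵀ by
        simp [Matrix.transpose_sub, Matrix.algebraMap_eq_diagonal]] at hu
      exact (Matrix.isUnit_transpose _).mp hu
    have heig : Module.End.HasEigenvalue (Matrix.toLin' Aᵀ) μ := by
      rw [Module.End.hasEigenvalue_iff_mem_spectrum]
      rwa [show Matrix.toLin' Aᵀ = Matrix.toLinAlgEquiv' Aᵀ from rfl, AlgEquiv.spectrum_eq]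
    obtain ⟨k, hk⟩ := eigenvalue_mem_ball heig
    rw [mem_closedBall_iff_norm'] at hk
    have hc : Aᵀ k k = ((B k k : ℝ) : ℂ) := rfl
    have hr : ∑ l ∈ Finset.univ.erase k, ‖Aᵀ k l‖ = ∑ i ∈ Finset.univ.erase k, |B i k| := by
      refine Finset.sum_congr rfl fun l _ => ?_
      show ‖((B l k : ℝ) : ℂ)‖ = |B l k|
      simp
    rw [hc, hr] at hk
    have hre : |(((B k k : ℝ) : ℂ) - μ).re| ≤ ‖((B k k : ℝ) : ℂ) - μ‖ := Complex.abs_re_le_norm _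
    have hre2 : (((B k k : ℝ) : ℂ) - μ).re = B k k - μ.re := by simp
    rw [hre2] at hre
    have habs : |B k k - μ.re| ≤ ∑ i ∈ Finset.univ.erase k, |B i k| := le_trans hre hk
    have := abs_le.mp habs
    have hj := hpos j ↑k (Ne.symm k.2)
    linarith [hkey k]
  · have := hst ↑k k.2
    linarith [hkey k]
end

section
/- Let G be an operator on H_A ⊗ H_C ⊗ H_B and let P_j, P_k be rank-one orthogonal projections onto distinct orthonormal basis vectors of H_C. Setting a-type and b-type matrix elements as in the proof, the real part of tr(G(I⊗P_j⊗I)G*) + tr(G(I⊗P_k⊗I)G*) − 2 tr((I⊗P_{jk}⊗I)G(I⊗P_{kj}⊗I)G*) is nonnegative, where P_{jk} = |φ_j⟩⟨φ_k|. More precisely, it is bounded below by tr{(I⊗(I−P_j)⊗I) G (I⊗P_j⊗I) G* (I⊗(I−P_j)⊗I)} + the same expression with j and k exchanged. -/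
/-!
Put `V = I ⊗ |φ_j⟩⟨φ_k| ⊗ I`. Normalisation of `φ_j` and `φ_k` gives `VV* = I ⊗ P_j ⊗ I`,
`V*V = I ⊗ P_k ⊗ I` and `VV*V = V`. For an idempotent `P`,
`tr((1 - P) M (1 - P)) = tr M - tr(PM)`, so the difference of the two sides is
`Re[tr(PGPG*) + tr(QGQG*) - 2 tr(VGV*G*)]` with `P = VV*`, `Q = V*V`, and this is exactly the
squared Frobenius norm `tr(XX*)` of `X = PGP - VGV*`.
-/

open Matrix

namespace Matrix

section Trace

variable {n R 𝕜 : Type*} [Fintype n]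

open scoped ComplexOrder in
theorem re_trace_mul_conjTranspose_self_nonneg [RCLike 𝕜] (M : Matrix n n 𝕜) :
    0 ≤ RCLike.re (M * Mᴴ).trace :=
  (RCLike.nonneg_iff.mp (posSemidef_self_mul_conjTranspose M).trace_nonneg).1

theorem trace_one_sub_mul_mul_one_sub [CommRing R] [DecidableEq n] {P : Matrix n n R}
    (hP : IsIdempotentElem P) (M : Matrix n n R) :
    ((1 - P) * M * (1 - P)).trace = M.trace - (P * M).trace := by
  rw [trace_mul_comm, ← Matrix.mul_assoc, hP.one_sub.eq, Matrix.sub_mul, Matrix.one_mul,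
    trace_sub]

theorem trace_sub_mul_conjTranspose_sub [CommRing R] [StarRing R] (X Y : Matrix n n R) :
    ((X - Y) * (X - Y)ᴴ).trace =
      (X * Xᴴ).trace + (Y * Yᴴ).trace - star (Y * Xᴴ).trace - (Y * Xᴴ).trace := by
  rw [← trace_conjTranspose, conjTranspose_mul, conjTranspose_conjTranspose, conjTranspose_sub,
    Matrix.sub_mul, Matrix.mul_sub, Matrix.mul_sub, trace_sub, trace_sub, trace_sub]
  ring

end Trace

section PartialIsometry

variable {n R 𝕜 : Type*} [Fintype n]

section CommSemiring

variable [CommSemiring R] [StarRing R]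

theorem trace_conj_mul_conjTranspose_self (V G : Matrix n n R) :
    (V * G * Vᴴ * (V * G * Vᴴ)ᴴ).trace = (Vᴴ * V * G * (Vᴴ * V) * Gᴴ).trace := by
  calc (V * G * Vᴴ * (V * G * Vᴴ)ᴴ).trace = (V * G * Vᴴ * V * Gᴴ * Vᴴ).trace := by
        simp only [conjTranspose_mul, conjTranspose_conjTranspose, Matrix.mul_assoc]
    _ = (Vᴴ * (V * G * Vᴴ * V * Gᴴ)).trace := trace_mul_comm _ _
    _ = (Vᴴ * V * G * (Vᴴ * V) * Gᴴ).trace := by simp only [Matrix.mul_assoc]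

variable {V : Matrix n n R}

theorem isIdempotentElem_mul_conjTranspose_self (hV : V * Vᴴ * V = V) :
    IsIdempotentElem (V * Vᴴ) := by
  rw [IsIdempotentElem, ← Matrix.mul_assoc, hV]

theorem isIdempotentElem_conjTranspose_mul_self (hV : V * Vᴴ * V = V) :
    IsIdempotentElem (Vᴴ * V) := by
  rw [IsIdempotentElem, Matrix.mul_assoc, ← Matrix.mul_assoc V, hV]

theorem trace_sandwich_mul_conjTranspose_self {P : Matrix n n R} (hP : IsIdempotentElem P)
    (hPH : Pᴴ = P) (G : Matrix n n R) :
    (P * G * P * (P * G * P)ᴴ).trace = (P * G * P * Gᴴ).trace := by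
  have hPP : ∀ X, P * (P * X) = P * X := fun X => by rw [← Matrix.mul_assoc, hP.eq]
  calc (P * G * P * (P * G * P)ᴴ).trace = (P * G * P * Gᴴ * P).trace := by
        simp only [conjTranspose_mul, hPH, Matrix.mul_assoc, hPP]
    _ = (P * (P * G * P * Gᴴ)).trace := trace_mul_comm _ _
    _ = (P * G * P * Gᴴ).trace := by simp only [Matrix.mul_assoc, hPP]

theorem trace_conj_mul_conjTranspose_sandwich (hV : V * Vᴴ * V = V) (G : Matrix n n R) :
    (V * G * Vᴴ * (V * Vᴴ * G * (V * Vᴴ))ᴴ).trace = (V * G * Vᴴ * Gᴴ).trace := by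
  have hVH : Vᴴ * V * Vᴴ = Vᴴ := by
    simpa only [conjTranspose_mul, conjTranspose_conjTranspose, Matrix.mul_assoc] using
      congrArg conjTranspose hV
  have hVV : ∀ X, V * (Vᴴ * (V * X)) = V * X := fun X => by
    rw [← Matrix.mul_assoc, ← Matrix.mul_assoc, hV]
  have hVHV : ∀ X, Vᴴ * (V * (Vᴴ * X)) = Vᴴ * X := fun X => by
    rw [← Matrix.mul_assoc, ← Matrix.mul_assoc, hVH]
  calc (V * G * Vᴴ * (V * Vᴴ * G * (V * Vᴴ))ᴴ).trace
        = (V * G * Vᴴ * Gᴴ * (V * Vᴴ)).trace := by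
        simp only [conjTranspose_mul, conjTranspose_conjTranspose, Matrix.mul_assoc, hVHV]
    _ = (V * Vᴴ * (V * G * Vᴴ * Gᴴ)).trace := trace_mul_comm _ _
    _ = (V * G * Vᴴ * Gᴴ).trace := by simp only [Matrix.mul_assoc, hVV]

end CommSemiring

variable [RCLike 𝕜] {V : Matrix n n 𝕜}

theorem two_mul_re_trace_conj_le (hV : V * Vᴴ * V = V) (G : Matrix n n 𝕜) :
    2 * RCLike.re (V * G * Vᴴ * Gᴴ).trace ≤
      RCLike.re (V * Vᴴ * G * (V * Vᴴ) * Gᴴ).trace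
        + RCLike.re (Vᴴ * V * G * (Vᴴ * V) * Gᴴ).trace := by
  have hnonneg := re_trace_mul_conjTranspose_self_nonneg (V * Vᴴ * G * (V * Vᴴ) - V * G * Vᴴ)
  rw [trace_sub_mul_conjTranspose_sub,
    trace_sandwich_mul_conjTranspose_self (isIdempotentElem_mul_conjTranspose_self hV)
      (isHermitian_mul_conjTranspose_self V).eq G,
    trace_conj_mul_conjTranspose_self V G, trace_conj_mul_conjTranspose_sandwich hV G] at hnonneg
  simp only [map_add, map_sub, RCLike.star_def, RCLike.conj_re] at hnonneg
  linarith

theorem re_trace_compl_sandwich_add_le [DecidableEq n] (hV : V * Vᴴ * V = V)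
    (G : Matrix n n 𝕜) :
    RCLike.re (((1 - V * Vᴴ) * G * (V * Vᴴ) * Gᴴ * (1 - V * Vᴴ)).trace
        + ((1 - Vᴴ * V) * G * (Vᴴ * V) * Gᴴ * (1 - Vᴴ * V)).trace) ≤
      RCLike.re ((G * (V * Vᴴ) * Gᴴ).trace + (G * (Vᴴ * V) * Gᴴ).trace
        - 2 * (V * G * Vᴴ * Gᴴ).trace) := by
  rw [Matrix.mul_assoc (1 - _) G, Matrix.mul_assoc (1 - _) (G * _),
    trace_one_sub_mul_mul_one_sub (isIdempotentElem_mul_conjTranspose_self hV),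
    Matrix.mul_assoc (1 - _) G, Matrix.mul_assoc (1 - _) (G * _),
    trace_one_sub_mul_mul_one_sub (isIdempotentElem_conjTranspose_mul_self hV)]
  have := two_mul_re_trace_conj_le hV G
  simp only [map_add, map_sub, RCLike.mul_re, RCLike.ofNat_re, RCLike.ofNat_im, zero_mul,
    sub_zero, ← Matrix.mul_assoc] at this ⊢
  linarith

end PartialIsometry

open scoped Kronecker

section Ampliation

variable {A B C R : Type*} [DecidableEq A] [DecidableEq B] [CommRing R]

def ampliate (M : Matrix C C R) : Matrix (A × C × B) (A × C × B) R :=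
  (1 : Matrix A A R) ⊗ₖ (M ⊗ₖ (1 : Matrix B B R))

theorem ampliate_apply (M : Matrix C C R) (p q : A × C × B) :
    ampliate M p q =
      (if p.1 = q.1 then 1 else 0) * M p.2.1 q.2.1 * (if p.2.2 = q.2.2 then 1 else 0) := by
  simp [ampliate, one_apply]

theorem ampliate_mul [Fintype A] [Fintype B] [Fintype C] (M N : Matrix C C R) :
    (ampliate (M * N) : Matrix (A × C × B) _ R) = ampliate M * ampliate N := by
  rw [ampliate, ampliate, ampliate, ← mul_kronecker_mul, ← mul_kronecker_mul, Matrix.mul_one,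
    Matrix.mul_one]

theorem ampliate_conjTranspose [StarRing R] (M : Matrix C C R) :
    (ampliate Mᴴ : Matrix (A × C × B) _ R) = (ampliate M)ᴴ := by
  rw [ampliate, ampliate, conjTranspose_kronecker, conjTranspose_kronecker, conjTranspose_one,
    conjTranspose_one]

theorem ampliate_one_sub [DecidableEq C] (M : Matrix C C R) :
    (ampliate (1 - M) : Matrix (A × C × B) _ R) = 1 - ampliate M := by
  ext p q
  simp only [ampliate_apply, sub_apply, one_apply, Prod.ext_iff]
  split_ifs <;> simp_all

end Ampliation

end Matrix

theorem stmt18_general {A C B : Type*} [Fintype A] [Fintype B] [Fintype C]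
    [DecidableEq A] [DecidableEq B] [DecidableEq C]
    (φ : C → C → ℂ)
    (hortho : ∀ l m, (∑ i, star (φ l i) * φ m i) = if l = m then 1 else 0)
    (j k : C)
    (G : Matrix (A × C × B) (A × C × B) ℂ)
    (E : Matrix C C ℂ → Matrix (A × C × B) (A × C × B) ℂ)
    (hE : ∀ M, E M = Matrix.of fun p q =>
        (if p.1 = q.1 then (1 : ℂ) else 0) * M p.2.1 q.2.1
          * (if p.2.2 = q.2.2 then (1 : ℂ) else 0)) :
    ((G * E (vecMulVec (φ j) (star (φ j))) * Gᴴ).trace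
        + (G * E (vecMulVec (φ k) (star (φ k))) * Gᴴ).trace
        - 2 * (E (vecMulVec (φ j) (star (φ k))) * G
                * E (vecMulVec (φ k) (star (φ j))) * Gᴴ).trace).re
      ≥ ((E (1 - vecMulVec (φ j) (star (φ j))) * G * E (vecMulVec (φ j) (star (φ j))) * Gᴴ
            * E (1 - vecMulVec (φ j) (star (φ j)))).trace
        + (E (1 - vecMulVec (φ k) (star (φ k))) * G * E (vecMulVec (φ k) (star (φ k))) * Gᴴ
            * E (1 - vecMulVec (φ k) (star (φ k)))).trace).re := by
  obtain rfl : E = ampliate := funext fun M => (hE M).trans (ext (ampliate_apply M)).symm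
  have hcancel : ∀ l m (x : C → ℂ),
      vecMulVec (φ l) (star (φ m)) * vecMulVec (φ m) x = vecMulVec (φ l) x := fun l m x => by
    have hnorm : star (φ m) ⬝ᵥ φ m = 1 := by simpa [dotProduct] using hortho m m
    rw [vecMulVec_mul_vecMulVec, hnorm, one_smul]
  set V : Matrix (A × C × B) _ ℂ := ampliate (vecMulVec (φ j) (star (φ k))) with hVdef
  have hVH : ampliate (vecMulVec (φ k) (star (φ j))) = Vᴴ := by
    rw [hVdef, ← ampliate_conjTranspose, conjTranspose_vecMulVec, star_star]
  have hVVH : ampliate (vecMulVec (φ j) (star (φ j))) = V * Vᴴ := by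
    rw [← hVH, hVdef, ← ampliate_mul, hcancel]
  have hVHV : ampliate (vecMulVec (φ k) (star (φ k))) = Vᴴ * V := by
    rw [← hVH, hVdef, ← ampliate_mul, hcancel]
  have hV : V * Vᴴ * V = V := by
    rw [← hVVH, hVdef, ← ampliate_mul, hcancel]
  rw [ampliate_one_sub, ampliate_one_sub, hVH, hVVH, hVHV]
  exact re_trace_compl_sandwich_add_le hV G

/-- The trace inequality of the Appendix Lemma: for `j ≠ k`,
`Re[ tr(G(I⊗P_j⊗I)G*) + tr(G(I⊗P_k⊗I)G*) − 2 tr((I⊗P_{jk}⊗I)G(I⊗P_{kj}⊗I)G*) ]`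
is bounded below by
`tr{(I⊗(I−P_j)⊗I) G (I⊗P_j⊗I) G* (I⊗(I−P_j)⊗I)} + (same with j ↔ k)`,
in particular it is nonnegative. -/
theorem stmt18 {A C B : Type*} [Fintype A] [Fintype B] [Fintype C]
    [DecidableEq A] [DecidableEq B] [DecidableEq C]
    (φ : C → C → ℂ)
    (hortho : ∀ l m, (∑ i, star (φ l i) * φ m i) = if l = m then 1 else 0)
    (j k : C) (hjk : j ≠ k)
    (G : Matrix (A × C × B) (A × C × B) ℂ)
    (E : Matrix C C ℂ → Matrix (A × C × B) (A × C × B) ℂ)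
    (hE : ∀ M, E M = Matrix.of fun p q =>
        (if p.1 = q.1 then (1 : ℂ) else 0) * M p.2.1 q.2.1
          * (if p.2.2 = q.2.2 then (1 : ℂ) else 0)) :
    ((G * E (vecMulVec (φ j) (star (φ j))) * Gᴴ).trace
        + (G * E (vecMulVec (φ k) (star (φ k))) * Gᴴ).trace
        - 2 * (E (vecMulVec (φ j) (star (φ k))) * G
                * E (vecMulVec (φ k) (star (φ j))) * Gᴴ).trace).re
      ≥ ((E (1 - vecMulVec (φ j) (star (φ j))) * G * E (vecMulVec (φ j) (star (φ j))) * Gᴴ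
            * E (1 - vecMulVec (φ j) (star (φ j)))).trace
        + (E (1 - vecMulVec (φ k) (star (φ k))) * G * E (vecMulVec (φ k) (star (φ k))) * Gᴴ
            * E (1 - vecMulVec (φ k) (star (φ k)))).trace).re :=
  stmt18_general φ hortho j k G E hE
end
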